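/- (At most one faulty predecessor, combined.) Assume ϑκ ≤ Λ − d and let H be a hardware clock. Suppose one of the following two situations holds. (a) Own predecessor faulty: W is a nonempty finite index set with pulse times (t_w)_{w∈W} and reception times r_w ∈ [t_w + d − u, t_w + d]; H_min := min_{w∈W} H(r_w), H_max := max_{w∈W} H(r_w); H_own is an arbitrary real; t_min := min_{w∈W} t_w and t_max := max_{w∈W} t_w. (b) Own predecessor correct, at most one faulty neighbour: t_own ∈ ℝ, r_own ∈ [t_own + d − u, t_own + d], H_own := H(r_own); W is a nonempty finite index set with pulse times (t_w)_{w∈W} and reception times r_w ∈ [t_w + d − u, t_w + d]; S := {H(r_w) : w ∈ W} ∪ F with F empty or a singleton {h} for an arbitrary real h; H_min := min S, H_max := max S; t_min and t_max are the minimum and maximum of {t_w : w ∈ W} ∪ {t_own}. In either case let C be the algorithm correction computed from (H_own, H_min, H_max) and t_pulse the unique real with H(t_pulse) = H_own + Λ − d − C. Then t_min + Λ − 2κ ≤ t_pulse ≤ t_max + Λ + 2κ. -/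

import Mathlib

/-!
Both bounds on `t_pulse` reduce to a single correct message `(t, r)` whose reception is close,
in local time, to the corrected time `L := H_own - C`: the pulse is issued `Λ - d` local time
after `L`, the clock runs at a rate in `[1, ϑ]` between `r` and `t_pulse`, and the identity
`ϑκ/2 = ϑu + (ϑ - 1)(Λ - d)` absorbs the resulting drift.

If the own predecessor is faulty, the correction keeps `L` within `3κ/2` of `[H_min, H_max]`,
so the messages realising `H_min` and `H_max` do. If it is correct, its own message serves,
except when the correction exceeds `ϑκ` (resp. is negative) and is determined by `H_max`
(resp. `H_min`): then `L = H_max + 3κ/2` (resp. `H_min - 3κ/2`), and the correct neighbour with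
the largest (resp. smallest) reading serves.
-/

def IsHardwareClock (ϑ : ℝ) (H : ℝ → ℝ) : Prop :=
  ∀ t t' : ℝ, t ≤ t' → t' - t ≤ H t' - H t ∧ H t' - H t ≤ ϑ * (t' - t)

def IsReception (d u t r : ℝ) : Prop :=
  t + d - u ≤ r ∧ r ≤ t + d

namespace IsHardwareClock

variable {ϑ : ℝ} {H : ℝ → ℝ} {t t' x : ℝ}

theorem sub_le_max_of_sub_le (hH : IsHardwareClock ϑ H) (h : H t' - H t ≤ x) :
    t' - t ≤ max x 0 := by
  rcases le_total t' t with ht | ht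
  · exact le_max_of_le_right (by linarith)
  · exact le_max_of_le_left ((hH t t' ht).1.trans h)

theorem min_le_sub_of_le_sub (hH : IsHardwareClock ϑ H) (hϑ : 0 < ϑ) (h : x ≤ H t' - H t) :
    min x (x / ϑ) ≤ t' - t := by
  rcases le_total t' t with ht | ht
  · exact min_le_of_left_le (by linarith [(hH t' t ht).1])
  · refine min_le_of_right_le ?_
    rw [div_le_iff₀ hϑ]
    linarith [(hH t t' ht).2]

end IsHardwareClock

section Pulse

variable {ϑ u d Λ κ : ℝ}

theorem two_mul_le_kappa (hϑ : 1 < ϑ) (hΛ : d < Λ) (hκ : κ = 2 * (u + (1 - 1/ϑ) * (Λ - d))) :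
    2 * u ≤ κ := by
  have : 0 ≤ (1 - 1/ϑ) * (Λ - d) :=
    mul_nonneg (sub_nonneg.mpr (div_le_one_of_le₀ hϑ.le (by linarith))) (by linarith)
  linarith

theorem mul_kappa_eq (hϑ : ϑ ≠ 0) (hκ : κ = 2 * (u + (1 - 1/ϑ) * (Λ - d))) :
    ϑ * κ = 2 * ϑ * u + 2 * (ϑ - 1) * (Λ - d) := by
  rw [hκ]
  field_simp

variable {H : ℝ → ℝ} {Hown C tb r tp : ℝ}

theorem le_pulse_time (hH : IsHardwareClock ϑ H) (hϑ : 1 < ϑ) (hu : 0 ≤ u) (hΛ : d < Λ)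
    (hκ : κ = 2 * (u + (1 - 1/ϑ) * (Λ - d))) (hϑκ : ϑ * κ ≤ Λ - d)
    (hpulse : H tp = Hown + Λ - d - C) (hr : IsReception d u tb r)
    (hL : H r ≤ Hown - C + max (3 * κ / 2) (ϑ * κ)) :
    tb + Λ - 2 * κ ≤ tp := by
  have h2u := two_mul_le_kappa hϑ hΛ hκ
  have hκϑ := mul_kappa_eq (by linarith) hκ
  have hκ_le : κ ≤ ϑ * κ := le_mul_of_one_le_left (by linarith) hϑ.le
  set x := Hown - C + Λ - d - H r
  have hstep : min x (x / ϑ) ≤ tp - r :=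
    hH.min_le_sub_of_le_sub (by linarith) (by rw [hpulse]; linarith)
  have ha : H r - (Hown - C) ≤ max (3 * κ / 2) (ϑ * κ) := by linarith
  have hdiv : Λ - d + u - 2 * κ ≤ x / ϑ := by
    rw [le_div_iff₀ (by linarith)]
    rcases le_max_iff.mp ha with h | h <;> linarith
  suffices Λ - d + u - 2 * κ ≤ min x (x / ϑ) by linarith [hr.1]
  rcases le_max_iff.mp ha with h | h
  · exact le_min (by linarith) hdiv
  · rwa [min_eq_right (div_le_self (by linarith) hϑ.le)]

theorem pulse_time_le (hH : IsHardwareClock ϑ H) (hΛ : d < Λ) (hκ : 0 ≤ κ)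
    (hpulse : H tp = Hown + Λ - d - C) (hr : IsReception d u tb r)
    (hL : Hown - C ≤ H r + 2 * κ) :
    tp ≤ tb + Λ + 2 * κ := by
  have hstep : tp - r ≤ max (Λ - d + 2 * κ) 0 :=
    hH.sub_le_max_of_sub_le (by rw [hpulse]; linarith)
  rw [max_eq_left (by linarith)] at hstep
  linarith [hr.2]

theorem pulse_time_mem (hH : IsHardwareClock ϑ H) (hϑ : 1 < ϑ) (hu : 0 ≤ u) (hΛ : d < Λ)
    (hκ : κ = 2 * (u + (1 - 1/ϑ) * (Λ - d))) (hϑκ : ϑ * κ ≤ Λ - d)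
    {tmin tmax : ℝ} (hpulse : H tp = Hown + Λ - d - C)
    (hsenders : (∃ t r, IsReception d u t r ∧ tmin ≤ t ∧
        H r ≤ Hown - C + max (3 * κ / 2) (ϑ * κ)) ∧
      ∃ t r, IsReception d u t r ∧ t ≤ tmax ∧ Hown - C ≤ H r + 2 * κ) :
    tmin + Λ - 2 * κ ≤ tp ∧ tp ≤ tmax + Λ + 2 * κ := by
  obtain ⟨⟨t₁, r₁, hr₁, ht₁, hL₁⟩, ⟨t₂, r₂, hr₂, ht₂, hL₂⟩⟩ := hsenders
  have hκ0 : 0 ≤ κ := by linarith [two_mul_le_kappa hϑ hΛ hκ]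
  exact ⟨by linarith [le_pulse_time hH hϑ hu hΛ hκ hϑκ hpulse hr₁ hL₁],
    by linarith [pulse_time_le hH hΛ hκ0 hpulse hr₂ hL₂]⟩

end Pulse

section Correction

variable {ϑ κ Hown Hmin Hmax Δ C : ℝ}

theorem le_and_le_of_isLeast {A B m : ℝ} (hκ : 0 ≤ κ) (hAB : A ≤ B)
    (h : IsLeast {x : ℝ | ∃ s : ℕ, x = max (A + 4 * (s : ℝ) * κ) (B - 4 * (s : ℝ) * κ)} m) :
    A ≤ m ∧ m ≤ B := by
  obtain ⟨⟨s, rfl⟩, hleast⟩ := h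
  have hs : 0 ≤ 4 * (s : ℝ) * κ := by positivity
  refine ⟨le_max_of_le_left (by linarith), ?_⟩
  simpa [hAB] using hleast ⟨0, rfl⟩

theorem correction_mem_Icc (hκ : 0 ≤ κ)
    (hlo : Hown - Hmax ≤ Δ + κ / 2) (hhi : Δ + κ / 2 ≤ Hown - Hmin)
    (hC1 : 0 ≤ Δ → Δ ≤ ϑ * κ → C = Δ)
    (hC2 : Δ < 0 → C = min (Hown - Hmin + 3 * κ / 2) 0)
    (hC3 : ϑ * κ < Δ → C = max (Hown - Hmax - 3 * κ / 2) (ϑ * κ)) :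
    C ∈ Set.Icc (Hown - Hmax - 3 * κ / 2) (Hown - Hmin + 3 * κ / 2) := by
  rcases lt_or_ge Δ 0 with h0 | h0
  · rw [hC2 h0]
    exact ⟨le_min (by linarith) (by linarith), min_le_left _ _⟩
  rcases le_or_gt Δ (ϑ * κ) with h1 | h1
  · rw [hC1 h0 h1]
    constructor <;> linarith
  · rw [hC3 h1]
    exact ⟨le_max_left _ _, max_le (by linarith) (by linarith)⟩

theorem correction_le_max (hϑκ : 0 ≤ ϑ * κ)
    (hC1 : 0 ≤ Δ → Δ ≤ ϑ * κ → C = Δ)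
    (hC2 : Δ < 0 → C = min (Hown - Hmin + 3 * κ / 2) 0)
    (hC3 : ϑ * κ < Δ → C = max (Hown - Hmax - 3 * κ / 2) (ϑ * κ)) :
    C ≤ max (ϑ * κ) (Hown - Hmax - 3 * κ / 2) := by
  rcases lt_or_ge Δ 0 with h0 | h0
  · rw [hC2 h0]
    exact le_max_of_le_left ((min_le_right _ _).trans hϑκ)
  rcases le_or_gt Δ (ϑ * κ) with h1 | h1
  · rw [hC1 h0 h1]
    exact le_max_of_le_left h1
  · rw [hC3 h1, max_comm]

theorem min_le_correction (hϑκ : 0 ≤ ϑ * κ)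
    (hC1 : 0 ≤ Δ → Δ ≤ ϑ * κ → C = Δ)
    (hC2 : Δ < 0 → C = min (Hown - Hmin + 3 * κ / 2) 0)
    (hC3 : ϑ * κ < Δ → C = max (Hown - Hmax - 3 * κ / 2) (ϑ * κ)) :
    min 0 (Hown - Hmin + 3 * κ / 2) ≤ C := by
  rcases lt_or_ge Δ 0 with h0 | h0
  · rw [hC2 h0, min_comm]
  rcases le_or_gt Δ (ϑ * κ) with h1 | h1
  · rw [hC1 h0 h1]
    exact min_le_of_left_le h0
  · rw [hC3 h1]
    exact min_le_of_left_le (hϑκ.trans (le_max_right _ _))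

end Correction

section Senders

variable {ι : Type*} [Finite ι] [Nonempty ι] {ϑ d u κ : ℝ} {H : ℝ → ℝ} {tw r : ι → ℝ}
  {Hown Hmin Hmax C tmin tmax : ℝ}

theorem senders_of_own_faulty (hr : ∀ w, IsReception d u (tw w) (r w))
    (hHmin : Hmin = ⨅ w, H (r w)) (hHmax : Hmax = ⨆ w, H (r w))
    (htmin : tmin = ⨅ w, tw w) (htmax : tmax = ⨆ w, tw w) (hκ : 0 ≤ κ)
    (hC : C ∈ Set.Icc (Hown - Hmax - 3 * κ / 2) (Hown - Hmin + 3 * κ / 2)) :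
    (∃ t r, IsReception d u t r ∧ tmin ≤ t ∧ H r ≤ Hown - C + max (3 * κ / 2) (ϑ * κ)) ∧
      ∃ t r, IsReception d u t r ∧ t ≤ tmax ∧ Hown - C ≤ H r + 2 * κ := by
  obtain ⟨w₀, hw₀⟩ := exists_eq_ciInf_of_finite (f := fun w => H (r w))
  obtain ⟨w₁, hw₁⟩ := exists_eq_ciSup_of_finite (f := fun w => H (r w))
  refine ⟨⟨tw w₀, r w₀, hr w₀, htmin ▸ ciInf_le (Finite.bddBelow_range tw) w₀, ?_⟩,
    ⟨tw w₁, r w₁, hr w₁, htmax ▸ le_ciSup (Finite.bddAbove_range tw) w₁, ?_⟩⟩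
  · linarith [hC.2, le_max_left (3 * κ / 2) (ϑ * κ)]
  · linarith [hC.1]

theorem senders_of_own_correct (hr : ∀ w, IsReception d u (tw w) (r w)) {town rown : ℝ}
    (hrown : IsReception d u town rown) {fault : Option ℝ}
    (hHmin : Hmin = fault.elim (⨅ w, H (r w)) (fun h => min (⨅ w, H (r w)) h))
    (hHmax : Hmax = fault.elim (⨆ w, H (r w)) (fun h => max (⨆ w, H (r w)) h))
    (htmin : tmin = min (⨅ w, tw w) town) (htmax : tmax = max (⨆ w, tw w) town) (hκ : 0 ≤ κ)
    (hC_le : C ≤ max (ϑ * κ) (H rown - Hmax - 3 * κ / 2))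
    (hC_ge : min 0 (H rown - Hmin + 3 * κ / 2) ≤ C) :
    (∃ t r, IsReception d u t r ∧ tmin ≤ t ∧ H r ≤ H rown - C + max (3 * κ / 2) (ϑ * κ)) ∧
      ∃ t r, IsReception d u t r ∧ t ≤ tmax ∧ H rown - C ≤ H r + 2 * κ := by
  obtain ⟨w₀, hw₀⟩ := exists_eq_ciInf_of_finite (f := fun w => H (r w))
  obtain ⟨w₁, hw₁⟩ := exists_eq_ciSup_of_finite (f := fun w => H (r w))
  have hmin : Hmin ≤ H (r w₀) := by
    rw [hHmin, hw₀]
    cases fault <;> simp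
  have hmax : H (r w₁) ≤ Hmax := by
    rw [hHmax, hw₁]
    cases fault <;> simp
  have htown : tmin ≤ town ∧ town ≤ tmax := ⟨htmin ▸ min_le_right _ _, htmax ▸ le_max_right _ _⟩
  constructor
  · rcases le_max_iff.mp hC_le with hC | hC
    · exact ⟨town, rown, hrown, htown.1, by linarith [le_max_right (3 * κ / 2) (ϑ * κ)]⟩
    · refine ⟨tw w₁, r w₁, hr w₁, ?_, by linarith [le_max_left (3 * κ / 2) (ϑ * κ)]⟩
      exact htmin ▸ (min_le_left _ _).trans (ciInf_le (Finite.bddBelow_range tw) w₁)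
  · rcases min_le_iff.mp hC_ge with hC | hC
    · exact ⟨town, rown, hrown, htown.2, by linarith⟩
    · refine ⟨tw w₀, r w₀, hr w₀, ?_, by linarith⟩
      exact htmax ▸ (le_ciSup (Finite.bddAbove_range tw) w₀).trans (le_max_left _ _)

end Senders

theorem stmt16_general
    (ϑ u d Λ κ : ℝ)
    (hϑ : 1 < ϑ) (hu : 0 ≤ u) (hΛ : d < Λ)
    (hκ : κ = 2 * (u + (1 - 1/ϑ) * (Λ - d)))
    (hϑκ : ϑ*κ ≤ Λ - d)
    (H : ℝ → ℝ)
    (hH : ∀ t t' : ℝ, t ≤ t' → t' - t ≤ H t' - H t ∧ H t' - H t ≤ ϑ * (t' - t))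
    (Hown Hmin Hmax tmin tmax : ℝ)
    (hscenario :
      -- (a) own predecessor faulty, all neighbouring predecessors correct
      (∃ (ι : Type) (_ : Fintype ι) (_ : Nonempty ι) (tw r : ι → ℝ),
        (∀ w : ι, tw w + d - u ≤ r w ∧ r w ≤ tw w + d) ∧
        Hmin = ⨅ w : ι, H (r w) ∧ Hmax = ⨆ w : ι, H (r w) ∧
        tmin = ⨅ w : ι, tw w ∧ tmax = ⨆ w : ι, tw w) ∨
      -- (b) own predecessor correct, at most one faulty neighbour
      (∃ town rown : ℝ,
        (town + d - u ≤ rown ∧ rown ≤ town + d) ∧ Hown = H rown ∧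
        ∃ (ι : Type) (_ : Fintype ι) (_ : Nonempty ι) (tw r : ι → ℝ)
          (fault : Option ℝ),
          (∀ w : ι, tw w + d - u ≤ r w ∧ r w ≤ tw w + d) ∧
          Hmin = fault.elim (⨅ w : ι, H (r w))
            (fun h => min (⨅ w : ι, H (r w)) h) ∧
          Hmax = fault.elim (⨆ w : ι, H (r w))
            (fun h => max (⨆ w : ι, H (r w)) h) ∧
          tmin = min (⨅ w : ι, tw w) town ∧
          tmax = max (⨆ w : ι, tw w) town))
    (Δ : ℝ)
    (hΔ : IsLeast {x : ℝ | ∃ s : ℕ,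
      x = max (Hown - Hmax + 4*(s:ℝ)*κ) (Hown - Hmin - 4*(s:ℝ)*κ)} (Δ + κ/2))
    (C : ℝ)
    (hC1 : 0 ≤ Δ → Δ ≤ ϑ*κ → C = Δ)
    (hC2 : Δ < 0 → C = min (Hown - Hmin + 3*κ/2) 0)
    (hC3 : ϑ*κ < Δ → C = max (Hown - Hmax - 3*κ/2) (ϑ*κ))
    (tpulse : ℝ) (hpulse : H tpulse = Hown + Λ - d - C) :
    tmin + Λ - 2*κ ≤ tpulse ∧ tpulse ≤ tmax + Λ + 2*κ := by
  have hκ0 : 0 ≤ κ := by linarith [two_mul_le_kappa hϑ hΛ hκ]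
  have hϑκ0 : 0 ≤ ϑ * κ := by positivity
  refine pulse_time_mem hH hϑ hu hΛ hκ hϑκ hpulse ?_
  rcases hscenario with ⟨ι, _, _, tw, r, hr, hHmin, hHmax, htmin, htmax⟩ |
    ⟨town, rown, hrown, rfl, ι, _, _, tw, r, fault, hr, hHmin, hHmax, htmin, htmax⟩
  · have hm : Hmin ≤ Hmax := hHmin ▸ hHmax ▸
      ciInf_le_ciSup (Finite.bddBelow_range _) (Finite.bddAbove_range _)
    obtain ⟨hΔlo, hΔhi⟩ := le_and_le_of_isLeast hκ0 (by linarith) hΔ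
    exact senders_of_own_faulty hr hHmin hHmax htmin htmax hκ0
      (correction_mem_Icc hκ0 hΔlo hΔhi hC1 hC2 hC3)
  · exact senders_of_own_correct hr hrown hHmin hHmax htmin htmax hκ0
      (correction_le_max hϑκ0 hC1 hC2 hC3) (min_le_correction hϑκ0 hC1 hC2 hC3)

/-- Corollary `fault`: at most one faulty predecessor, combined.
Scenario (a): own predecessor faulty; scenario (b): own predecessor correct and
at most one faulty neighbouring predecessor. -/
theorem stmt16
    (ϑ u d Λ κ : ℝ)
    (hϑ : 1 < ϑ) (hu : 0 ≤ u) (hd : u ≤ d) (hΛ : d < Λ)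
    (hκ : κ = 2 * (u + (1 - 1/ϑ) * (Λ - d)))
    (hϑκ : ϑ*κ ≤ Λ - d)
    (H : ℝ → ℝ)
    (hH : ∀ t t' : ℝ, t ≤ t' → t' - t ≤ H t' - H t ∧ H t' - H t ≤ ϑ * (t' - t))
    (Hown Hmin Hmax tmin tmax : ℝ)
    (hscenario :
      -- (a) own predecessor faulty, all neighbouring predecessors correct
      (∃ (ι : Type) (_ : Fintype ι) (_ : Nonempty ι) (tw r : ι → ℝ),
        (∀ w : ι, tw w + d - u ≤ r w ∧ r w ≤ tw w + d) ∧
        Hmin = ⨅ w : ι, H (r w) ∧ Hmax = ⨆ w : ι, H (r w) ∧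
        tmin = ⨅ w : ι, tw w ∧ tmax = ⨆ w : ι, tw w) ∨
      -- (b) own predecessor correct, at most one faulty neighbour
      (∃ town rown : ℝ,
        (town + d - u ≤ rown ∧ rown ≤ town + d) ∧ Hown = H rown ∧
        ∃ (ι : Type) (_ : Fintype ι) (_ : Nonempty ι) (tw r : ι → ℝ)
          (fault : Option ℝ),
          (∀ w : ι, tw w + d - u ≤ r w ∧ r w ≤ tw w + d) ∧
          Hmin = fault.elim (⨅ w : ι, H (r w))
            (fun h => min (⨅ w : ι, H (r w)) h) ∧
          Hmax = fault.elim (⨆ w : ι, H (r w))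
            (fun h => max (⨆ w : ι, H (r w)) h) ∧
          tmin = min (⨅ w : ι, tw w) town ∧
          tmax = max (⨆ w : ι, tw w) town))
    (Δ : ℝ)
    (hΔ : IsLeast {x : ℝ | ∃ s : ℕ,
      x = max (Hown - Hmax + 4*(s:ℝ)*κ) (Hown - Hmin - 4*(s:ℝ)*κ)} (Δ + κ/2))
    (C : ℝ)
    (hC1 : 0 ≤ Δ → Δ ≤ ϑ*κ → C = Δ)
    (hC2 : Δ < 0 → C = min (Hown - Hmin + 3*κ/2) 0)
    (hC3 : ϑ*κ < Δ → C = max (Hown - Hmax - 3*κ/2) (ϑ*κ))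
    (tpulse : ℝ) (hpulse : H tpulse = Hown + Λ - d - C) :
    tmin + Λ - 2*κ ≤ tpulse ∧ tpulse ≤ tmax + Λ + 2*κ :=
  stmt16_general ϑ u d Λ κ hϑ hu hΛ hκ hϑκ H hH Hown Hmin Hmax tmin tmax hscenario Δ hΔ C hC1 hC2
    hC3 tpulse hpulse
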